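/- The triplet (z*, λ*, μ*) satisfies the Karush–Kuhn–Tucker conditions: Dz* − v + λ*c − μ*eₙ = 0, c^⊤z* = 0, z*ₙ ≥ 0, μ* ≥ 0, and μ*·z*ₙ = 0. Moreover (λ*,μ*) is a Lagrange multiplier for the primal problem: μ* ≥ 0 and inf_{z∈ℝⁿ} [ f(z) + λ*·c^⊤z − μ*·zₙ ] = −½·v^⊤z*, which is the optimal value of the primal problem. -/

import Mathlib

open Finset

noncomputable section

namespace Stmt6

/-- The last index of `Fin (n+2)`. -/
def lastIdx (n : ℕ) : Fin (n + 2) := Fin.last (n + 1)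

variable {n : ℕ}

/-- The `n`-th standard basis vector `eₙ`. -/
def eVec (n : ℕ) : Fin (n + 2) → ℝ := fun i => if i = lastIdx n then 1 else 0

/-- `c^⊤ D⁻¹ v` for the diagonal matrix `D = diag d`. -/
def cDv (d v c : Fin (n + 2) → ℝ) : ℝ := ∑ i, c i * v i / d i

/-- `c^⊤ D⁻¹ c` for the diagonal matrix `D = diag d`. -/
def cDc (d c : Fin (n + 2) → ℝ) : ℝ := ∑ i, c i * c i / d i

/-- The indicator `1_A`. -/
def indA (d v c : Fin (n + 2) → ℝ) : ℝ :=
  if v (lastIdx n) - cDv d v c / cDc d c * c (lastIdx n) < 0 then 1 else 0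

/-- `λ*`. -/
def lamStar (d v c : Fin (n + 2) → ℝ) : ℝ :=
  (cDv d v c - c (lastIdx n) * v (lastIdx n) / d (lastIdx n) * indA d v c) /
    (cDc d c - c (lastIdx n) ^ 2 / d (lastIdx n) * indA d v c)

/-- `μ* = max (-(vₙ - λ* cₙ)) 0`. -/
def muStar (d v c : Fin (n + 2) → ℝ) : ℝ :=
  max (-(v (lastIdx n) - lamStar d v c * c (lastIdx n))) 0

/-- `z* = D⁻¹ (v - λ* c + μ* eₙ)`. -/
def zStar (d v c : Fin (n + 2) → ℝ) : Fin (n + 2) → ℝ := fun i =>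
  (v i - lamStar d v c * c i + muStar d v c * eVec n i) / d i

/-- The primal cost function `f(z) = ½ z^⊤ D z - v^⊤ z`. -/
def f (d v z : Fin (n + 2) → ℝ) : ℝ :=
  (1 / 2) * ∑ i, d i * z i ^ 2 - ∑ i, v i * z i

/-- The Lagrangian `L(z,λ,μ) = f(z) + λ c^⊤ z - μ zₙ`. -/
def L (d v c : Fin (n + 2) → ℝ) (lam mu : ℝ) (z : Fin (n + 2) → ℝ) : ℝ :=
  f d v z + lam * ∑ i, c i * z i - mu * z (lastIdx n)


/-!
The Lagrangian `L(·, λ, μ)` is the cost `f` with `v` replaced by `w = v - λc + μeₙ`, a separable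
convex quadratic whose minimiser is `D⁻¹w`, with value `-½ wᵀD⁻¹w`; at `(λ*, μ*)` this minimiser
is `z*`. Since `vₙ - λ*cₙ + μ* = max (vₙ - λ*cₙ) 0`, we get `z*ₙ ≥ 0` and `μ* z*ₙ = 0` for free.
For `cᵀz* = 0` one checks `μ* = (λ*cₙ - vₙ)·1_A`, so `cᵀz*` is exactly numerator minus `λ*`
times denominator in the formula for `λ*`; the denominator is at least `∑_{i<n} cᵢ²/dᵢ > 0`.
Then `wᵀz* = vᵀz*` and `L(z*) = f(z*)`, and weak duality `L ≤ f` on the feasible set makes `z*`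
primal optimal.
-/

section Lagrangian

variable {d v c w x z : Fin (n + 2) → ℝ} {lam mu : ℝ}

theorem sum_eVec_mul (z : Fin (n + 2) → ℝ) : ∑ i, eVec n i * z i = z (lastIdx n) := by
  simp [eVec, ite_mul]

theorem sum_sub_add_eVec_mul (v c z : Fin (n + 2) → ℝ) (lam mu : ℝ) :
    ∑ i, (v i - lam * c i + mu * eVec n i) * z i
      = ∑ i, v i * z i - lam * ∑ i, c i * z i + mu * z (lastIdx n) := by
  simp only [add_mul, sub_mul, mul_assoc, sum_add_distrib, sum_sub_distrib, ← mul_sum,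
    sum_eVec_mul]

theorem L_eq_f_sub_add_eVec (d v c : Fin (n + 2) → ℝ) (lam mu : ℝ) (z : Fin (n + 2) → ℝ) :
    L d v c lam mu z = f d (fun i => v i - lam * c i + mu * eVec n i) z := by
  rw [L, f, f, sum_sub_add_eVec_mul]
  ring

theorem L_le_f (hz : ∑ i, c i * z i = 0) (hzn : 0 ≤ z (lastIdx n)) (hmu : 0 ≤ mu) :
    L d v c lam mu z ≤ f d v z := by
  rw [L, hz, mul_zero, add_zero]
  exact sub_le_self _ (mul_nonneg hmu hzn)

theorem L_eq_f (hz : ∑ i, c i * z i = 0) (hcomp : mu * z (lastIdx n) = 0) :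
    L d v c lam mu z = f d v z := by
  rw [L, hz, hcomp]
  ring

theorem f_eq_of_mul_eq (hx : ∀ i, d i * x i = w i) :
    f d w x = -(1 / 2) * ∑ i, w i * x i := by
  have hquad : ∑ i, d i * x i ^ 2 = ∑ i, w i * x i :=
    sum_congr rfl fun i _ => by rw [← hx]; ring
  rw [f, hquad]
  ring

theorem f_le_f_of_mul_eq (hd : ∀ i, 0 ≤ d i) (hx : ∀ i, d i * x i = w i) (z : Fin (n + 2) → ℝ) :
    f d w x ≤ f d w z := by
  have hgap : f d w z - f d w x = ∑ i, (1 / 2) * (d i * (z i - x i) ^ 2) := by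
    simp only [f, mul_sum, ← sum_sub_distrib]
    exact sum_congr rfl fun i _ => by rw [← hx]; ring
  have : 0 ≤ ∑ i, (1 / 2) * (d i * (z i - x i) ^ 2) :=
    sum_nonneg fun i _ => by have := hd i; positivity
  linarith

end Lagrangian

section KKT

variable {d v c : Fin (n + 2) → ℝ}

theorem mul_zStar {i : Fin (n + 2)} (hdi : d i ≠ 0) :
    d i * zStar d v c i = v i - lamStar d v c * c i + muStar d v c * eVec n i :=
  mul_div_cancel₀ _ hdi

theorem zStar_last (d v c : Fin (n + 2) → ℝ) :
    zStar d v c (lastIdx n)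
      = max (v (lastIdx n) - lamStar d v c * c (lastIdx n)) 0 / d (lastIdx n) := by
  simp only [zStar, muStar, eVec, if_pos, mul_one]
  rw [add_max, add_neg_cancel, add_zero, max_comm]

theorem max_neg_mul_max_eq_zero {α : Type*} [Ring α] [LinearOrder α] [IsOrderedRing α] (a : α) : max (-a) 0 * max a 0 = 0 := by
  rcases le_total a 0 with ha | ha <;> simp [ha]

theorem muStar_mul_zStar_last (d v c : Fin (n + 2) → ℝ) :
    muStar d v c * zStar d v c (lastIdx n) = 0 := by
  rw [zStar_last, muStar, mul_div_assoc', max_neg_mul_max_eq_zero, zero_div]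

theorem indA_le_one (d v c : Fin (n + 2) → ℝ) : indA d v c ≤ 1 := by
  unfold indA; split_ifs <;> norm_num

theorem cDc_sub_last_pos (hd : ∀ i, 0 < d i) (hc : ∃ i, i ≠ lastIdx n ∧ c i ≠ 0) :
    0 < cDc d c - c (lastIdx n) ^ 2 / d (lastIdx n) := by
  obtain ⟨i, hi, hci⟩ := hc
  have hpos : 0 < ∑ j ∈ univ.erase (lastIdx n), c j * c j / d j :=
    sum_pos' (fun j _ => div_nonneg (mul_self_nonneg _) (hd j).le)
      ⟨i, mem_erase.2 ⟨hi, mem_univ _⟩, div_pos (mul_self_pos.2 hci) (hd i)⟩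
  rw [cDc, ← sum_erase_add _ _ (mem_univ (lastIdx n)), sq]
  linarith

theorem lamStar_denom_pos (hd : ∀ i, 0 < d i) (hc : ∃ i, i ≠ lastIdx n ∧ c i ≠ 0) :
    0 < cDc d c - c (lastIdx n) ^ 2 / d (lastIdx n) * indA d v c := by
  have : c (lastIdx n) ^ 2 / d (lastIdx n) * indA d v c ≤ c (lastIdx n) ^ 2 / d (lastIdx n) :=
    mul_le_of_le_one_right (div_nonneg (sq_nonneg _) (hd _).le) (indA_le_one d v c)
  linarith [cDc_sub_last_pos hd hc]

theorem muStar_eq_mul_indA (hd : ∀ i, 0 < d i) (hc : ∃ i, i ≠ lastIdx n ∧ c i ≠ 0) :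
    muStar d v c = (lamStar d v c * c (lastIdx n) - v (lastIdx n)) * indA d v c := by
  by_cases hA : v (lastIdx n) - cDv d v c / cDc d c * c (lastIdx n) < 0
  · have hind : indA d v c = 1 := if_pos hA
    have hB := lamStar_denom_pos (v := v) hd hc
    rw [hind, mul_one] at hB
    have hS : 0 < cDc d c := by
      linarith [div_nonneg (sq_nonneg (c (lastIdx n))) (hd (lastIdx n)).le]
    -- `vₙ - λ* cₙ` has the sign of `vₙ - (c^⊤D⁻¹v / c^⊤D⁻¹c) cₙ`
    have hscale : v (lastIdx n) - lamStar d v c * c (lastIdx n)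
        = cDc d c * (v (lastIdx n) - cDv d v c / cDc d c * c (lastIdx n))
          / (cDc d c - c (lastIdx n) ^ 2 / d (lastIdx n)) := by
      rw [lamStar, hind]
      field_simp
      ring
    have hneg : v (lastIdx n) - lamStar d v c * c (lastIdx n) < 0 := by
      rw [hscale]; exact div_neg_of_neg_of_pos (mul_neg_of_pos_of_neg hS hA) hB
    rw [muStar, max_eq_left (by linarith), hind]
    ring
  · have hind : indA d v c = 0 := if_neg hA
    have hlam : lamStar d v c = cDv d v c / cDc d c := by simp [lamStar, hind]
    rw [muStar, hind, mul_zero, max_eq_right]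
    linarith [hlam ▸ not_lt.1 hA]

theorem sum_mul_zStar (hd : ∀ i, 0 < d i) (hc : ∃ i, i ≠ lastIdx n ∧ c i ≠ 0) :
    ∑ i, c i * zStar d v c i = 0 := by
  have hterm : ∀ i, c i * zStar d v c i = c i * v i / d i - lamStar d v c * (c i * c i / d i)
      + muStar d v c * (eVec n i * (c i / d i)) := fun i => by simp only [zStar]; ring
  have hlam : lamStar d v c * (cDc d c - c (lastIdx n) ^ 2 / d (lastIdx n) * indA d v c)
      = cDv d v c - c (lastIdx n) * v (lastIdx n) / d (lastIdx n) * indA d v c :=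
    div_mul_cancel₀ _ (lamStar_denom_pos hd hc).ne'
  rw [sum_congr rfl fun i _ => hterm i, sum_add_distrib, sum_sub_distrib, ← mul_sum, ← mul_sum,
    sum_eVec_mul, muStar_eq_mul_indA hd hc]
  simp only [cDv, cDc] at hlam
  linear_combination -hlam

end KKT

/-- The triplet `(z*, λ*, μ*)` satisfies the KKT conditions, and `(λ*, μ*)` is a
Lagrange multiplier for the primal problem: `inf_z L(z,λ*,μ*) = -½ v^⊤ z*`, which is
the optimal value of the primal problem. -/
theorem kkt_and_lagrange_multiplier
    (n : ℕ) (d v c : Fin (n + 2) → ℝ)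
    (hd : ∀ i, 0 < d i)
    (hc : ∃ i : Fin (n + 2), i ≠ lastIdx n ∧ c i ≠ 0) :
    (∀ i, d i * zStar d v c i - v i + lamStar d v c * c i - muStar d v c * eVec n i = 0) ∧
    (∑ i, c i * zStar d v c i = 0) ∧
    0 ≤ zStar d v c (lastIdx n) ∧
    0 ≤ muStar d v c ∧
    muStar d v c * zStar d v c (lastIdx n) = 0 ∧
    sInf (Set.range (L d v c (lamStar d v c) (muStar d v c))) =
      -(1 / 2) * ∑ i, v i * zStar d v c i ∧
    sInf (f d v '' {z | (∑ i, c i * z i = 0) ∧ 0 ≤ z (lastIdx n)}) =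
      -(1 / 2) * ∑ i, v i * zStar d v c i := by
  have hdz : ∀ i, d i * zStar d v c i = v i - lamStar d v c * c i + muStar d v c * eVec n i :=
    fun i => mul_zStar (hd i).ne'
  have hcz : ∑ i, c i * zStar d v c i = 0 := sum_mul_zStar hd hc
  have hzn : 0 ≤ zStar d v c (lastIdx n) := by
    rw [zStar_last]; exact div_nonneg (le_max_right _ _) (hd _).le
  have hmu : 0 ≤ muStar d v c := le_max_right _ _
  have hcomp := muStar_mul_zStar_last d v c
  have hmin : ∀ z, L d v c (lamStar d v c) (muStar d v c) (zStar d v c)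
      ≤ L d v c (lamStar d v c) (muStar d v c) z := fun z => by
    simp only [L_eq_f_sub_add_eVec]; exact f_le_f_of_mul_eq (fun i => (hd i).le) hdz z
  have hval : L d v c (lamStar d v c) (muStar d v c) (zStar d v c)
      = -(1 / 2) * ∑ i, v i * zStar d v c i := by
    rw [L_eq_f_sub_add_eVec, f_eq_of_mul_eq hdz, sum_sub_add_eVec_mul, hcz, hcomp]; ring
  refine ⟨fun i => by rw [hdz]; ring, hcz, hzn, hmu, hcomp, ?_, ?_⟩
  · rw [← hval]
    exact IsLeast.csInf_eq ⟨⟨_, rfl⟩, by rintro _ ⟨z, rfl⟩; exact hmin z⟩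
  · rw [← hval]
    refine IsLeast.csInf_eq ⟨⟨zStar d v c, ⟨hcz, hzn⟩, (L_eq_f hcz hcomp).symm⟩, ?_⟩
    rintro _ ⟨z, ⟨hz, hz_last⟩, rfl⟩
    exact (hmin z).trans (L_le_f hz hz_last hmu)

end Stmt6
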